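/- Let λ > 0 be a real eigenvalue of the adjacency matrix Π of the compressed automaton admitting an entrywise strictly positive right eigenvector (so that λ is the Perron eigenvalue of Π). Then the ratio of consecutive language counts converges to λ: lim_{ℓ→∞} |L^{=ℓ+1}| / |L^{=ℓ}| = λ. -/

import Mathlib

/-- `Uset k m` : nonincreasing `m`-tuples with entries in `{0, …, k-m}`. -/
def Uset (k m : ℕ) : Set (Fin m → ℕ) :=
  {u | (∀ i, u i ≤ k - m) ∧ ∀ i j : Fin m, i ≤ j → u j ≤ u i}

/-- `Ucset k m c` : states of the compressed automaton, i.e. the elements `u ∈ U`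
such that `(u₁ - u₂) mod c = 0` or `u_m = 0`. -/
def Ucset (k m c : ℕ) (hm : 2 ≤ m) : Set (Fin m → ℕ) :=
  {u | u ∈ Uset k m ∧
    ((u ⟨0, by omega⟩ - u ⟨1, by omega⟩) % c = 0 ∨ u ⟨m - 1, by omega⟩ = 0)}

/-- The target of the `1`-transition: `⟨max(u₁-1,0), …, max(u_m-1,0)⟩`
(in `ℕ`, truncated subtraction realizes `max(· - 1, 0)`). -/
def oneStep (m : ℕ) (u : Fin m → ℕ) : Fin m → ℕ := fun i => u i - 1

/-- The target of the `0`-transition of the compressed automaton: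
`⟨u₀, u₁, …, u_{m-1}⟩` where `u₀ = k - m` if `u_{m-1} = 0` and
`u₀ = k - m - ((k - m - u₁) mod c)` otherwise. -/
def zeroStepC (k m c : ℕ) (hm : 2 ≤ m) (u : Fin m → ℕ) : Fin m → ℕ :=
  fun i => if (i : ℕ) = 0 then
      (if u ⟨m - 2, by omega⟩ = 0 then k - m
       else k - m - (k - m - u ⟨0, by omega⟩) % c)
    else u ⟨(i : ℕ) - 1, lt_of_le_of_lt (Nat.sub_le _ _) i.isLt⟩

/-- Membership in the transition set `F_c` of the compressed automaton `(U_c, F_c)`. -/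
def FcRel (k m c : ℕ) (hm : 2 ≤ m) (u : Fin m → ℕ) (σ : Bool) (u' : Fin m → ℕ) : Prop :=
  u ∈ Ucset k m c hm ∧
  ((σ = true ∧ u' = oneStep m u) ∨
   (σ = false ∧ u ⟨m - 1, by omega⟩ = 0 ∧ u' = zeroStepC k m c hm u))

/-- The compressed state set is finite. -/
lemma Ucset_finite (k m c : ℕ) (hm : 2 ≤ m) : (Ucset k m c hm).Finite := by
  have hsub : Ucset k m c hm ⊆ Set.pi Set.univ (fun _ : Fin m => Set.Iic (k - m)) := by
    intro u hu i _
    exact hu.1.1 i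
  exact (Set.Finite.pi (fun _ => Set.finite_Iic _)).subset hsub

noncomputable instance (k m c : ℕ) (hm : 2 ≤ m) : Fintype (Ucset k m c hm) :=
  (Ucset_finite k m c hm).fintype

noncomputable instance (k m c : ℕ) (hm : 2 ≤ m) : DecidableEq (Ucset k m c hm) :=
  Classical.decEq _

open Classical in
/-- The adjacency matrix `Π` of the compressed automaton, indexed by `U_c`:
entry `1` if there is a transition (labelled `1` or `0`), entry `0` otherwise. -/
noncomputable def adjMatrix (k m c : ℕ) (hm : 2 ≤ m) :
    Matrix (Ucset k m c hm) (Ucset k m c hm) ℝ :=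
  fun u u' =>
    if FcRel k m c hm u.val true u'.val ∨ FcRel k m c hm u.val false u'.val then 1 else 0

/-- `hasRunIn X step q w` : the word `w = σ₁ ⋯ σ_ℓ` admits a run
`q = q₀, q₁, …, q_ℓ` with all `q_t` (for `t ≥ 1`) in `X` and
`(q_{t-1}, σ_t, q_t)` a transition, for all `1 ≤ t ≤ ℓ`. -/
def hasRunIn {S : Type} (X : Set S) (step : S → Bool → S → Prop) :
    S → List Bool → Prop
  | _, [] => True
  | q, σ :: rest => ∃ q' ∈ X, step q σ q' ∧ hasRunIn X step q' rest

/-- The initial state `⟨0, …, 0⟩` belongs to `U_c`. -/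
lemma q0_mem (k m c : ℕ) (hm : 2 ≤ m) : (fun _ => 0 : Fin m → ℕ) ∈ Ucset k m c hm :=
  ⟨⟨fun _ => Nat.zero_le _, fun _ _ _ => le_refl _⟩, Or.inr rfl⟩

/-- `Lcount k m c hm ℓ` : the number of words of length `ℓ` accepted by the
compressed automaton `(U_c, F_c)` from the initial state `⟨0, …, 0⟩`. -/
noncomputable def Lcount (k m c : ℕ) (hm : 2 ≤ m) (l : ℕ) : ℕ :=
  Nat.card {w : List Bool |
    w.length = l ∧ hasRunIn (Ucset k m c hm) (FcRel k m c hm) (fun _ => 0) w}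

open Matrix Filter

section Aux

variable {k m c : ℕ} {hm : 2 ≤ m}

lemma oneStep_mem {u : Fin m → ℕ} (hu : u ∈ Ucset k m c hm) :
    oneStep m u ∈ Ucset k m c hm := by
  obtain ⟨⟨hb, hmono⟩, hcond⟩ := hu
  refine ⟨⟨fun i => le_trans (Nat.sub_le _ _) (hb i), fun i j hij => Nat.sub_le_sub_right (hmono i j hij) 1⟩, ?_⟩
  rcases hcond with h | h
  · by_cases h1 : u ⟨1, by omega⟩ = 0
    · right
      have : u ⟨m-1, by omega⟩ ≤ u ⟨1, by omega⟩ := hmono ⟨1, by omega⟩ ⟨m-1, by omega⟩ (by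
        simp [Fin.le_def]; omega)
      simp [oneStep]; omega
    · left
      have h01 : u ⟨1, by omega⟩ ≤ u ⟨0, by omega⟩ := hmono ⟨0, by omega⟩ ⟨1, by omega⟩ (by simp [Fin.le_def])
      simp only [oneStep]
      have : u ⟨0, by omega⟩ - 1 - (u ⟨1, by omega⟩ - 1) = u ⟨0, by omega⟩ - u ⟨1, by omega⟩ := by omega
      rw [this]; exact h
  · right; simp [oneStep, h]

lemma zeroStep_mem (hmk : m < k) {u : Fin m → ℕ} (hu : u ∈ Ucset k m c hm)
    (h0 : u ⟨m - 1, by omega⟩ = 0) :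
    zeroStepC k m c hm u ∈ Ucset k m c hm := by
  obtain ⟨⟨hb, hmono⟩, _⟩ := hu
  have hb0 : u ⟨0, by omega⟩ ≤ k - m := hb _
  constructor
  · constructor
    · intro i
      by_cases hi : (i : ℕ) = 0 <;> simp [zeroStepC, hi]
      · split <;> omega
      · exact hb _
    · intro i j hij
      by_cases hi : (i : ℕ) = 0
      · by_cases hj : (j : ℕ) = 0
        · simp [zeroStepC, hi, hj]
        · simp only [zeroStepC, hi, hj, if_true, if_false]
          have h2 : u ⟨(j:ℕ) - 1, lt_of_le_of_lt (Nat.sub_le _ _) j.isLt⟩ ≤ u ⟨0, by omega⟩ :=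
            hmono ⟨0, by omega⟩ _ (by simp [Fin.le_def])
          have hmod : (k - m - u ⟨0, by omega⟩) % c ≤ k - m - u ⟨0, by omega⟩ := Nat.mod_le _ _
          split <;> omega
      · have hj : (j : ℕ) ≠ 0 := by
          have := Fin.le_def.mp hij; omega
        simp only [zeroStepC, hi, hj, if_false]
        exact hmono _ _ (by simp [Fin.le_def]; have := Fin.le_def.mp hij; omega)
  · -- the compression condition
    by_cases hlast : u ⟨m - 2, by omega⟩ = 0
    · right
      have hm1 : m - 1 ≠ 0 := by omega
      simp only [zeroStepC, hm1, if_false]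
      have : (⟨m - 1 - 1, lt_of_le_of_lt (Nat.sub_le _ _) (by omega)⟩ : Fin m) = ⟨m - 2, by omega⟩ := by
        simp; omega
      rw [this]; exact hlast
    · left
      simp only [zeroStepC, if_true, hlast, if_false]
      have h1 : ((1 : ℕ) : ℕ) ≠ 0 := one_ne_zero
      norm_num
      have hmod : (k - m - u ⟨0, by omega⟩) % c ≤ k - m - u ⟨0, by omega⟩ := Nat.mod_le _ _
      have : k - m - (k - m - u ⟨0, by omega⟩) % c - u ⟨0, by omega⟩
          = (k - m - u ⟨0, by omega⟩) - (k - m - u ⟨0, by omega⟩) % c := by omega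
      rw [this]
      have hdm := Nat.div_add_mod (k - m - u ⟨0, by omega⟩) c
      have : k - m - u ⟨0, by omega⟩ - (k - m - u ⟨0, by omega⟩) % c
          = c * ((k - m - u ⟨0, by omega⟩) / c) := by omega
      rw [this, Nat.mul_mod_right]

end Aux

section Aux2
variable {k m c : ℕ} {hm : 2 ≤ m}

lemma steps_ne (hmk : m < k) {u : Fin m → ℕ} (hu : u ∈ Uset k m)
    (h0 : u ⟨m - 1, by omega⟩ = 0) :
    oneStep m u ≠ zeroStepC k m c hm u := by
  intro h
  obtain ⟨hb, hmono⟩ := hu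
  have key : ∀ j : ℕ, j ≤ m - 1 → u ⟨m - 1 - j, by omega⟩ = 0 := by
    intro j
    induction j with
    | zero => intro _; simpa using h0
    | succ n ih =>
      intro hn1
      have hprev : u ⟨m - 1 - n, by omega⟩ = 0 := ih (by omega)
      have hne : (m - 1 - n : ℕ) ≠ 0 := by omega
      have := congrFun h ⟨m - 1 - n, by omega⟩
      simp only [oneStep, zeroStepC, hne, if_false] at this
      rw [hprev] at this
      have hidx : (⟨m - 1 - n - 1, lt_of_le_of_lt (Nat.sub_le _ _) (by omega)⟩ : Fin m)
          = ⟨m - 1 - (n + 1), by omega⟩ := by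
        apply Fin.ext; simp; omega
      rw [hidx] at this
      exact this.symm
  have hu0 : u ⟨0, by omega⟩ = 0 := by
    have := key (m - 1) le_rfl
    simpa using this
  have hall : ∀ i : Fin m, u i = 0 := by
    intro i
    have := hmono ⟨0, by omega⟩ i (by simp [Fin.le_def])
    omega
  have := congrFun h ⟨0, by omega⟩
  simp only [oneStep, zeroStepC, if_true, hall] at this
  omega

lemma fcRel_true_iff {u u' : Fin m → ℕ} (hu : u ∈ Ucset k m c hm) :
    FcRel k m c hm u true u' ↔ u' = oneStep m u := by
  constructor
  · rintro ⟨-, ⟨-, h⟩ | ⟨h, -⟩⟩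
    · exact h
    · exact absurd h (by simp)
  · intro h; exact ⟨hu, Or.inl ⟨rfl, h⟩⟩

lemma fcRel_false_iff {u u' : Fin m → ℕ} (hu : u ∈ Ucset k m c hm) :
    FcRel k m c hm u false u' ↔ u ⟨m - 1, by omega⟩ = 0 ∧ u' = zeroStepC k m c hm u := by
  constructor
  · rintro ⟨-, ⟨h, -⟩ | ⟨-, h1, h2⟩⟩
    · exact absurd h (by simp)
    · exact ⟨h1, h2⟩
  · rintro ⟨h1, h2⟩; exact ⟨hu, Or.inr ⟨rfl, h1, h2⟩⟩

lemma run_true_iff {u : Fin m → ℕ} (hu : u ∈ Ucset k m c hm) (w : List Bool) :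
    hasRunIn (Ucset k m c hm) (FcRel k m c hm) u (true :: w) ↔
      hasRunIn (Ucset k m c hm) (FcRel k m c hm) (oneStep m u) w := by
  constructor
  · rintro ⟨q', -, hstep, hrun⟩
    rwa [(fcRel_true_iff hu).mp hstep] at hrun
  · intro hrun
    exact ⟨oneStep m u, oneStep_mem hu, (fcRel_true_iff hu).mpr rfl, hrun⟩

lemma run_false_iff (hmk : m < k) {u : Fin m → ℕ} (hu : u ∈ Ucset k m c hm) (w : List Bool) :
    hasRunIn (Ucset k m c hm) (FcRel k m c hm) u (false :: w) ↔
      (u ⟨m - 1, by omega⟩ = 0 ∧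
        hasRunIn (Ucset k m c hm) (FcRel k m c hm) (zeroStepC k m c hm u) w) := by
  constructor
  · rintro ⟨q', -, hstep, hrun⟩
    obtain ⟨h1, h2⟩ := (fcRel_false_iff hu).mp hstep
    rw [h2] at hrun
    exact ⟨h1, hrun⟩
  · rintro ⟨h1, hrun⟩
    exact ⟨zeroStepC k m c hm u, zeroStep_mem hmk hu h1, (fcRel_false_iff hu).mpr ⟨h1, rfl⟩, hrun⟩

end Aux2

section Aux3
variable {k m c : ℕ} {hm : 2 ≤ m}

lemma mulVec_adj (hmk : m < k) (g : Ucset k m c hm → ℝ) (u : Ucset k m c hm) :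
    (adjMatrix k m c hm *ᵥ g) u =
      g ⟨oneStep m u.val, oneStep_mem u.2⟩ +
      (if h0 : u.val ⟨m - 1, by omega⟩ = 0 then
        g ⟨zeroStepC k m c hm u.val, zeroStep_mem hmk u.2 h0⟩ else 0) := by
  classical
  set a : Ucset k m c hm := ⟨oneStep m u.val, oneStep_mem u.2⟩ with ha
  simp only [Matrix.mulVec, dotProduct]
  by_cases h0 : u.val ⟨m - 1, by omega⟩ = 0
  · set b : Ucset k m c hm := ⟨zeroStepC k m c hm u.val, zeroStep_mem hmk u.2 h0⟩ with hb
    have hab : a ≠ b := fun h => steps_ne (hm := hm) hmk u.2.1 h0 (congrArg Subtype.val h)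
    have hentry : ∀ j, adjMatrix k m c hm u j = if (j = a ∨ j = b) then 1 else 0 := by
      intro j
      simp only [adjMatrix]
      refine if_congr ?_ rfl rfl
      rw [fcRel_true_iff u.2, fcRel_false_iff u.2]
      constructor
      · rintro (h | ⟨-, h⟩)
        · exact Or.inl (Subtype.ext h)
        · exact Or.inr (Subtype.ext h)
      · rintro (h | h)
        · exact Or.inl (congrArg Subtype.val h)
        · exact Or.inr ⟨h0, congrArg Subtype.val h⟩
    have hsum : ∀ j : Ucset k m c hm, adjMatrix k m c hm u j * g j
        = (if j = a then g j else 0) + (if j = b then g j else 0) := by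
      intro j
      rw [hentry j]
      by_cases h1 : j = a
      · have h2 : j ≠ b := fun hcontra => hab (h1 ▸ hcontra)
        simp [h1, h2, hab]
      · by_cases h2 : j = b <;> simp [h1, h2, Ne.symm hab]
    rw [Finset.sum_congr rfl (fun j _ => hsum j), Finset.sum_add_distrib,
      Finset.sum_ite_eq' Finset.univ a g, Finset.sum_ite_eq' Finset.univ b g]
    simp [h0, hb]
  · have hentry : ∀ j, adjMatrix k m c hm u j = if j = a then 1 else 0 := by
      intro j
      simp only [adjMatrix]
      refine if_congr ?_ rfl rfl
      rw [fcRel_true_iff u.2, fcRel_false_iff u.2]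
      constructor
      · rintro (h | ⟨hc0, -⟩)
        · exact Subtype.ext h
        · exact absurd hc0 h0
      · intro h; exact Or.inl (congrArg Subtype.val h)
    have hsum : ∀ j : Ucset k m c hm, adjMatrix k m c hm u j * g j
        = (if j = a then g j else 0) := by
      intro j
      rw [hentry j]
      by_cases h1 : j = a <;> simp [h1]
    rw [Finset.sum_congr rfl (fun j _ => hsum j), Finset.sum_ite_eq' Finset.univ a g]
    simp [h0]

end Aux3

section Aux4
variable {k m c : ℕ} {hm : 2 ≤ m}

lemma finite_words (ℓ : ℕ) (u : Fin m → ℕ) :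
    {w : List Bool | w.length = ℓ ∧ hasRunIn (Ucset k m c hm) (FcRel k m c hm) u w}.Finite :=
  (List.finite_length_eq Bool ℓ).subset (fun _ h => h.1)

lemma card_words (hmk : m < k) :
    ∀ (ℓ : ℕ) (u : Fin m → ℕ) (hu : u ∈ Ucset k m c hm),
    (({w : List Bool | w.length = ℓ ∧ hasRunIn (Ucset k m c hm) (FcRel k m c hm) u w}.ncard : ℝ))
      = ((adjMatrix k m c hm ^ ℓ) *ᵥ (fun _ => 1)) ⟨u, hu⟩ := by
  intro ℓ
  induction ℓ with
  | zero =>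
    intro u hu
    have hset : {w : List Bool | w.length = 0 ∧
        hasRunIn (Ucset k m c hm) (FcRel k m c hm) u w} = {([] : List Bool)} := by
      ext w
      simp only [Set.mem_setOf_eq, Set.mem_singleton_iff, List.length_eq_zero_iff]
      constructor
      · rintro ⟨h, -⟩; exact h
      · rintro rfl; exact ⟨rfl, trivial⟩
    rw [hset, Set.ncard_singleton, pow_zero, Matrix.one_mulVec]
    norm_num
  | succ ℓ ih =>
    intro u hu
    set A := {w : List Bool | w.length = ℓ ∧
      hasRunIn (Ucset k m c hm) (FcRel k m c hm) (oneStep m u) w} with hA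
    set B := {w : List Bool | w.length = ℓ ∧
      hasRunIn (Ucset k m c hm) (FcRel k m c hm) (zeroStepC k m c hm u) w} with hB
    have hsplit : {w : List Bool | w.length = ℓ + 1 ∧
        hasRunIn (Ucset k m c hm) (FcRel k m c hm) u w}
        = (List.cons true '' A) ∪
          (List.cons false '' (if u ⟨m - 1, by omega⟩ = 0 then B else ∅)) := by
      ext w
      constructor
      · rintro ⟨hlen, hrun⟩
        match w with
        | [] => simp at hlen
        | true :: w' =>
          left
          exact ⟨w', ⟨by simpa using hlen, (run_true_iff hu w').mp hrun⟩, rfl⟩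
        | false :: w' =>
          right
          obtain ⟨h0, hrun'⟩ := (run_false_iff hmk hu w').mp hrun
          exact ⟨w', by rw [if_pos h0]; exact ⟨by simpa using hlen, hrun'⟩, rfl⟩
      · rintro (⟨w', ⟨hlen, hrun⟩, rfl⟩ | ⟨w', hw', rfl⟩)
        · exact ⟨by simpa using hlen, (run_true_iff hu w').mpr hrun⟩
        · by_cases h0 : u ⟨m - 1, by omega⟩ = 0
          · rw [if_pos h0] at hw'
            exact ⟨by simpa using hw'.1, (run_false_iff hmk hu w').mpr ⟨h0, hw'.2⟩⟩
          · rw [if_neg h0] at hw'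
            exact absurd hw' (Set.notMem_empty _)
    have hAfin : A.Finite := finite_words ℓ _
    have hBfin : (if u ⟨m - 1, by omega⟩ = 0 then B else ∅).Finite := by
      split
      · exact finite_words ℓ _
      · exact Set.finite_empty
    have hdisj : Disjoint (List.cons true '' A)
        (List.cons false '' (if u ⟨m - 1, by omega⟩ = 0 then B else ∅)) := by
      rw [Set.disjoint_left]
      rintro x ⟨w1, -, rfl⟩ ⟨w2, -, hx⟩
      simp at hx
    rw [hsplit, Set.ncard_union_eq hdisj (hAfin.image _) (hBfin.image _),
      Set.ncard_image_of_injective _ (List.cons_injective),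
      Set.ncard_image_of_injective _ (List.cons_injective)]
    push_cast
    rw [ih _ (oneStep_mem hu)]
    rw [pow_succ', ← Matrix.mulVec_mulVec, mulVec_adj hmk]
    by_cases h0 : u ⟨m - 1, by omega⟩ = 0
    · rw [if_pos h0, dif_pos h0, ih _ (zeroStep_mem hmk hu h0)]
    · rw [if_neg h0, dif_neg h0, Set.ncard_empty]
      norm_num
end Aux4

section Stoch

variable {ι : Type} [Fintype ι] [DecidableEq ι] [Nonempty ι]

lemma row_stoch_pow (P : Matrix ι ι ℝ) (h0 : ∀ i j, 0 ≤ P i j)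
    (h1 : ∀ i, ∑ j, P i j = 1) (n : ℕ) :
    (∀ i j, 0 ≤ (P ^ n) i j) ∧ (∀ i, ∑ j, (P ^ n) i j = 1) := by
  induction n with
  | zero =>
    constructor
    · intro i j
      simp only [pow_zero, Matrix.one_apply]
      split <;> norm_num
    · intro i
      simp [pow_zero, Matrix.one_apply, Finset.sum_ite_eq]
  | succ n ih =>
    constructor
    · intro i j
      rw [pow_succ', Matrix.mul_apply]
      exact Finset.sum_nonneg fun l _ => mul_nonneg (h0 i l) (ih.1 l j)
    · intro i
      simp only [pow_succ', Matrix.mul_apply]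
      rw [Finset.sum_comm]
      calc ∑ l, ∑ j, P i l * (P ^ n) l j
          = ∑ l, P i l * ∑ j, (P ^ n) l j := by
            simp [Finset.mul_sum]
        _ = 1 := by simp only [ih.2]; simpa using h1 i

lemma mulVec_le_sup (Q : Matrix ι ι ℝ) (h0 : ∀ i j, 0 ≤ Q i j)
    (h1 : ∀ i, ∑ j, Q i j = 1) (g : ι → ℝ) (i : ι) :
    (Q *ᵥ g) i ≤ Finset.univ.sup' Finset.univ_nonempty g := by
  simp only [Matrix.mulVec, dotProduct]
  calc ∑ j, Q i j * g j ≤ ∑ j, Q i j * Finset.univ.sup' Finset.univ_nonempty g :=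
        Finset.sum_le_sum fun j _ => mul_le_mul_of_nonneg_left
          (Finset.le_sup' g (Finset.mem_univ j)) (h0 i j)
    _ = Finset.univ.sup' Finset.univ_nonempty g := by
        rw [← Finset.sum_mul, h1 i, one_mul]

lemma inf_le_mulVec (Q : Matrix ι ι ℝ) (h0 : ∀ i j, 0 ≤ Q i j)
    (h1 : ∀ i, ∑ j, Q i j = 1) (g : ι → ℝ) (i : ι) :
    Finset.univ.inf' Finset.univ_nonempty g ≤ (Q *ᵥ g) i := by
  simp only [Matrix.mulVec, dotProduct]
  calc Finset.univ.inf' Finset.univ_nonempty g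
      = ∑ j, Q i j * Finset.univ.inf' Finset.univ_nonempty g := by
        rw [← Finset.sum_mul, h1 i, one_mul]
    _ ≤ ∑ j, Q i j * g j :=
        Finset.sum_le_sum fun j _ => mul_le_mul_of_nonneg_left
          (Finset.inf'_le g (Finset.mem_univ j)) (h0 i j)

lemma stoch_conv (P : Matrix ι ι ℝ) (h0 : ∀ i j, 0 ≤ P i j) (h1 : ∀ i, ∑ j, P i j = 1)
    (q0 : ι) (N : ℕ) (hN : 1 ≤ N) (ε : ℝ) (hε : 0 < ε) (hD : ∀ i, ε ≤ (P ^ N) i q0)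
    (v : ι → ℝ) :
    ∃ α : ℝ, Finset.univ.inf' Finset.univ_nonempty v ≤ α ∧
      (∀ (ℓ : ℕ) (i : ι), Finset.univ.inf' Finset.univ_nonempty v ≤ ((P ^ ℓ) *ᵥ v) i) ∧
      ∀ i, Tendsto (fun ℓ : ℕ => ((P ^ ℓ) *ᵥ v) i) atTop (nhds α) := by
  set f : ℕ → ι → ℝ := fun ℓ => (P ^ ℓ) *ᵥ v with hf
  set mm : ℕ → ℝ := fun ℓ => Finset.univ.inf' Finset.univ_nonempty (f ℓ) with hmm
  set MM : ℕ → ℝ := fun ℓ => Finset.univ.sup' Finset.univ_nonempty (f ℓ) with hMM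
  have hf0 : f 0 = v := by simp [hf, Matrix.one_mulVec]
  have hfadd : ∀ a b, f (a + b) = (P ^ a) *ᵥ f b := by
    intro a b
    simp only [hf, Matrix.mulVec_mulVec, ← pow_add]
  have hfs : ∀ ℓ, f (ℓ + 1) = P *ᵥ f ℓ := by
    intro ℓ
    have := hfadd 1 ℓ
    simpa [pow_one, Nat.add_comm] using this
  have hmm_mono : Monotone mm := by
    apply monotone_nat_of_le_succ
    intro ℓ
    apply Finset.le_inf'
    intro i _
    rw [hfs ℓ]
    exact inf_le_mulVec P h0 h1 (f ℓ) i
  have hMM_anti : Antitone MM := by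
    apply antitone_nat_of_succ_le
    intro ℓ
    apply Finset.sup'_le
    intro i _
    rw [hfs ℓ]
    exact mulVec_le_sup P h0 h1 (f ℓ) i
  have hmm_le_MM : ∀ ℓ, mm ℓ ≤ MM ℓ := fun ℓ =>
    le_trans (Finset.inf'_le _ (Finset.mem_univ (Classical.arbitrary ι)))
      (Finset.le_sup' _ (Finset.mem_univ (Classical.arbitrary ι)))
  have hmm_le_f : ∀ ℓ i, mm ℓ ≤ f ℓ i := fun ℓ i => Finset.inf'_le _ (Finset.mem_univ i)
  have hf_le_MM : ∀ ℓ i, f ℓ i ≤ MM ℓ := fun ℓ i => Finset.le_sup' _ (Finset.mem_univ i)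
  -- Q = P ^ N properties
  have hQ0 := (row_stoch_pow P h0 h1 N).1
  have hQ1 := (row_stoch_pow P h0 h1 N).2
  have hε1 : ε ≤ 1 := by
    calc ε ≤ (P ^ N) q0 q0 := hD q0
      _ ≤ ∑ j, (P ^ N) q0 j :=
        Finset.single_le_sum (fun j _ => hQ0 q0 j) (Finset.mem_univ q0)
      _ = 1 := hQ1 q0
  -- contraction
  have hcontr : ∀ ℓ, MM (N + ℓ) - mm (N + ℓ) ≤ (1 - ε) * (MM ℓ - mm ℓ) := by
    intro ℓ
    have hkey : ∀ i, f (N + ℓ) i ≤ ε * f ℓ q0 + (1 - ε) * MM ℓ ∧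
        ε * f ℓ q0 + (1 - ε) * mm ℓ ≤ f (N + ℓ) i := by
      intro i
      set R : ι → ℝ := fun j => (P ^ N) i j - (if j = q0 then ε else 0) with hR
      have hR0 : ∀ j, 0 ≤ R j := by
        intro j
        simp only [hR]
        split
        · rename_i hj; rw [hj]; linarith [hD i]
        · simpa using hQ0 i j
      have hRsum : ∑ j, R j = 1 - ε := by
        simp only [hR]
        rw [Finset.sum_sub_distrib, hQ1 i, Finset.sum_ite_eq' Finset.univ q0 (fun _ => ε)]
        simp
      have hfN : f (N + ℓ) i = ε * f ℓ q0 + ∑ j, R j * f ℓ j := by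
        rw [hfadd N ℓ]
        simp only [Matrix.mulVec, dotProduct, hR, sub_mul, Finset.sum_sub_distrib]
        have : ∑ j, (if j = q0 then ε else 0) * f ℓ j
            = ε * f ℓ q0 := by
          rw [Finset.sum_congr rfl (fun j _ => by
            rw [ite_mul, zero_mul] : ∀ j ∈ Finset.univ, (if j = q0 then ε else 0) * f ℓ j = if j = q0 then ε * f ℓ j else 0)]
          rw [Finset.sum_ite_eq' Finset.univ q0 (fun j => ε * f ℓ j)]
          simp
        rw [this]
        ring
      constructor
      · rw [hfN]
        have : ∑ j, R j * f ℓ j ≤ (1 - ε) * MM ℓ := by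
          calc ∑ j, R j * f ℓ j ≤ ∑ j, R j * MM ℓ :=
              Finset.sum_le_sum fun j _ => mul_le_mul_of_nonneg_left (hf_le_MM ℓ j) (hR0 j)
            _ = (1 - ε) * MM ℓ := by rw [← Finset.sum_mul, hRsum]
        linarith
      · rw [hfN]
        have : (1 - ε) * mm ℓ ≤ ∑ j, R j * f ℓ j := by
          calc (1 - ε) * mm ℓ = ∑ j, R j * mm ℓ := by rw [← Finset.sum_mul, hRsum]
            _ ≤ ∑ j, R j * f ℓ j :=
              Finset.sum_le_sum fun j _ => mul_le_mul_of_nonneg_left (hmm_le_f ℓ j) (hR0 j)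
        linarith
    have hMMb : MM (N + ℓ) ≤ ε * f ℓ q0 + (1 - ε) * MM ℓ :=
      Finset.sup'_le _ _ fun i _ => (hkey i).1
    have hmmb : ε * f ℓ q0 + (1 - ε) * mm ℓ ≤ mm (N + ℓ) :=
      Finset.le_inf' _ _ fun i _ => (hkey i).2
    linarith
  -- oscillation
  set osc : ℕ → ℝ := fun ℓ => MM ℓ - mm ℓ with hosc
  have hosc0 : ∀ ℓ, 0 ≤ osc ℓ := fun ℓ => sub_nonneg.mpr (hmm_le_MM ℓ)
  have hosc_anti : Antitone osc := fun a b hab => by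
    simp only [hosc]
    have := hMM_anti hab
    have := hmm_mono hab
    linarith
  have hosc_iter : ∀ j : ℕ, osc (N * j) ≤ (1 - ε) ^ j * osc 0 := by
    intro j
    induction j with
    | zero => simp
    | succ n ih =>
      have : N * (n + 1) = N + N * n := by ring
      rw [this]
      calc osc (N + N * n) ≤ (1 - ε) * osc (N * n) := hcontr (N * n)
        _ ≤ (1 - ε) * ((1 - ε) ^ n * osc 0) :=
          mul_le_mul_of_nonneg_left ih (by linarith)
        _ = (1 - ε) ^ (n + 1) * osc 0 := by ring
  have hosc_tendsto : Tendsto osc atTop (nhds 0) := by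
    have hbdd : BddBelow (Set.range osc) := ⟨0, fun x ⟨ℓ, hℓ⟩ => hℓ ▸ hosc0 ℓ⟩
    have h := tendsto_atTop_ciInf hosc_anti hbdd
    have hinf : ⨅ ℓ, osc ℓ = 0 := by
      apply le_antisymm
      · have hpow : Tendsto (fun j : ℕ => (1 - ε) ^ j * osc 0) atTop (nhds 0) := by
          have := (tendsto_pow_atTop_nhds_zero_of_lt_one (by linarith : (0:ℝ) ≤ 1 - ε)
            (by linarith : (1:ℝ) - ε < 1)).mul_const (osc 0)
          simpa using this
        apply ge_of_tendsto hpow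
        filter_upwards with j
        exact le_trans (ciInf_le hbdd (N * j)) (hosc_iter j)
      · exact le_ciInf hosc0
    rwa [hinf] at h
  -- limit
  have hbddA : BddAbove (Set.range mm) := ⟨MM 0, fun x ⟨ℓ, hℓ⟩ => hℓ ▸
    le_trans (hmm_le_MM ℓ) (hMM_anti (Nat.zero_le ℓ))⟩
  set α : ℝ := ⨆ ℓ, mm ℓ with hα
  have hmm_tendsto : Tendsto mm atTop (nhds α) := tendsto_atTop_ciSup hmm_mono hbddA
  have hMM_tendsto : Tendsto MM atTop (nhds α) := by
    have : MM = fun ℓ => mm ℓ + osc ℓ := by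
      funext ℓ; simp [hosc]
    rw [this]
    simpa using hmm_tendsto.add hosc_tendsto
  have hmm0 : mm 0 = Finset.univ.inf' Finset.univ_nonempty v := by rw [hmm]; simp [hf0]
  refine ⟨α, ?_, ?_, ?_⟩
  · rw [← hmm0]
    exact le_ciSup hbddA 0
  · intro ℓ i
    rw [← hmm0]
    exact le_trans (hmm_mono (Nat.zero_le ℓ)) (hmm_le_f ℓ i)
  · intro i
    exact tendsto_of_tendsto_of_tendsto_of_le_of_le hmm_tendsto hMM_tendsto
      (fun ℓ => hmm_le_f ℓ i) (fun ℓ => hf_le_MM ℓ i)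

end Stoch

/-- If `λ > 0` admits an entrywise strictly positive right eigenvector of the
adjacency matrix `Π` of the compressed automaton (so `λ` is the Perron
eigenvalue of `Π`), then `|L^{=ℓ+1}| / |L^{=ℓ}| → λ` as `ℓ → ∞`. -/
theorem language_count_ratio_tendsto (k m c : ℕ) (hm : 2 ≤ m) (hmk : m < k)
    (hc : 1 ≤ c) (lam : ℝ) (hlam : 0 < lam)
    (y : Ucset k m c hm → ℝ) (hy : ∀ u, 0 < y u)
    (heig : (adjMatrix k m c hm).mulVec y = lam • y) :
    Tendsto (fun l : ℕ => (Lcount k m c hm (l + 1) : ℝ) / (Lcount k m c hm l : ℝ))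
      atTop (nhds lam) := by
  classical
  haveI : Nonempty (Ucset k m c hm) := ⟨⟨fun _ => 0, q0_mem k m c hm⟩⟩
  set q0 : Ucset k m c hm := ⟨fun _ => 0, q0_mem k m c hm⟩ with hq0
  set A := adjMatrix k m c hm with hA
  -- the normalized stochastic matrix
  set P : Matrix (Ucset k m c hm) (Ucset k m c hm) ℝ :=
    fun u u' => A u u' * y u' / (lam * y u) with hP
  have hA0 : ∀ u u', 0 ≤ A u u' := by
    intro u u'
    simp only [hA, adjMatrix]
    split <;> norm_num
  have heig' : ∀ u, ∑ u', A u u' * y u' = lam * y u := by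
    intro u
    have := congrFun heig u
    simpa [Matrix.mulVec, dotProduct] using this
  have hP0 : ∀ u u', 0 ≤ P u u' := by
    intro u u'
    exact div_nonneg (mul_nonneg (hA0 u u') (hy u').le)
      (mul_nonneg hlam.le (hy u).le)
  have hP1 : ∀ u, ∑ u', P u u' = 1 := by
    intro u
    simp only [hP, div_eq_mul_inv, ← Finset.sum_mul]
    rw [heig' u, mul_inv_cancel₀ (mul_pos hlam (hy u)).ne']
  -- Doeblin condition
  set ymin := Finset.univ.inf' Finset.univ_nonempty y with hyminDef
  set ymax := Finset.univ.sup' Finset.univ_nonempty y with hymaxDef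
  have hymin : 0 < ymin := (Finset.lt_inf'_iff _).mpr fun i _ => hy i
  have hymax : 0 < ymax :=
    lt_of_lt_of_le (hy q0) (Finset.le_sup' y (Finset.mem_univ q0))
  set δ : ℝ := ymin / (lam * ymax) with hδdef
  have hδ : 0 < δ := div_pos hymin (mul_pos hlam hymax)
  have hstep_entry : ∀ u : Ucset k m c hm,
      A u ⟨oneStep m u.val, oneStep_mem u.2⟩ = 1 := by
    intro u
    simp only [hA, adjMatrix]
    rw [if_pos]
    exact Or.inl ⟨u.2, Or.inl ⟨rfl, rfl⟩⟩
  have hPδ : ∀ u : Ucset k m c hm, δ ≤ P u ⟨oneStep m u.val, oneStep_mem u.2⟩ := by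
    intro u
    simp only [hP, hstep_entry u, one_mul]
    exact div_le_div₀ (hy _).le (Finset.inf'_le y (Finset.mem_univ _))
      (mul_pos hlam (hy u))
      (mul_le_mul_of_nonneg_left (Finset.le_sup' y (Finset.mem_univ u)) hlam.le)
  have mem_sub : ∀ (j : ℕ) (u : Fin m → ℕ), u ∈ Ucset k m c hm →
      (fun i => u i - j) ∈ Ucset k m c hm := by
    intro j
    induction j with
    | zero =>
      intro u hu
      have : (fun i => u i - 0) = u := funext fun i => Nat.sub_zero _
      rw [this]; exact hu
    | succ j ih =>
      intro u hu
      have : (fun i => u i - (j + 1)) = oneStep m (fun i => u i - j) := by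
        funext i
        simp only [oneStep]
        omega
      rw [this]
      exact oneStep_mem (ih u hu)
  have hpath : ∀ (j : ℕ) (u : Ucset k m c hm),
      δ ^ j ≤ (P ^ j) u ⟨fun i => u.val i - j, mem_sub j u.val u.2⟩ := by
    intro j
    induction j with
    | zero =>
      intro u
      have : (⟨fun i => u.val i - 0, mem_sub 0 u.val u.2⟩ : Ucset k m c hm) = u :=
        Subtype.ext (funext fun i => Nat.sub_zero _)
      rw [this, pow_zero, pow_zero]
      simp [Matrix.one_apply]
    | succ j ih =>
      intro u
      set a : Ucset k m c hm := ⟨oneStep m u.val, oneStep_mem u.2⟩ with ha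
      have htgt : (⟨fun i => u.val i - (j + 1), mem_sub (j+1) u.val u.2⟩ : Ucset k m c hm)
          = ⟨fun i => a.val i - j, mem_sub j a.val a.2⟩ := by
        apply Subtype.ext
        funext i
        simp only [ha, oneStep]
        omega
      rw [htgt, pow_succ' P j, Matrix.mul_apply]
      have hterm : δ * δ ^ j ≤ P u a * (P ^ j) a ⟨fun i => a.val i - j, mem_sub j a.val a.2⟩ :=
        mul_le_mul (hPδ u) (ih a) (pow_nonneg hδ.le j) (le_trans hδ.le (hPδ u))
      calc δ ^ (j + 1) = δ * δ ^ j := by ring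
        _ ≤ P u a * (P ^ j) a ⟨fun i => a.val i - j, mem_sub j a.val a.2⟩ := hterm
        _ ≤ ∑ w, P u w * (P ^ j) w ⟨fun i => a.val i - j, mem_sub j a.val a.2⟩ :=
          Finset.single_le_sum
            (fun w _ => mul_nonneg (hP0 u w) ((row_stoch_pow P hP0 hP1 j).1 w _))
            (Finset.mem_univ a)
  set N : ℕ := k - m with hNdef
  have hN : 1 ≤ N := by omega
  have hD : ∀ u : Ucset k m c hm, δ ^ N ≤ (P ^ N) u q0 := by
    intro u
    have := hpath N u
    have hq : (⟨fun i => u.val i - N, mem_sub N u.val u.2⟩ : Ucset k m c hm) = q0 := by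
      apply Subtype.ext
      funext i
      exact Nat.sub_eq_zero_of_le (u.2.1.1 i)
    rwa [hq] at this
  -- the normalized limit
  set v : Ucset k m c hm → ℝ := fun u => (y u)⁻¹ with hv
  obtain ⟨α, hαmin, hbound, htend⟩ :=
    stoch_conv P hP0 hP1 q0 N hN (δ ^ N) (pow_pos hδ N) hD v
  have hvpos : 0 < Finset.univ.inf' Finset.univ_nonempty v :=
    (Finset.lt_inf'_iff _).mpr fun i _ => inv_pos.mpr (hy i)
  have hα : 0 < α := lt_of_lt_of_le hvpos hαmin
  have hg : ∀ ℓ, 0 < ((P ^ ℓ) *ᵥ v) q0 := fun ℓ => lt_of_lt_of_le hvpos (hbound ℓ q0)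
  -- transfer formula
  have hform : ∀ ℓ : ℕ, ∀ i, ((A ^ ℓ) *ᵥ (fun _ => (1:ℝ))) i
      = lam ^ ℓ * y i * ((P ^ ℓ) *ᵥ v) i := by
    intro ℓ
    induction ℓ with
    | zero =>
      intro i
      simp only [pow_zero, Matrix.one_mulVec, hv]
      rw [one_mul, mul_inv_cancel₀ (hy i).ne']
    | succ ℓ ih =>
      intro i
      have l1 : ((A ^ (ℓ+1)) *ᵥ fun _ => (1:ℝ)) i
          = ∑ j, A i j * ((A ^ ℓ) *ᵥ fun _ => (1:ℝ)) j := by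
        rw [pow_succ', ← Matrix.mulVec_mulVec]
        simp [Matrix.mulVec, dotProduct]
      have l2 : ((P ^ (ℓ+1)) *ᵥ v) i = ∑ j, P i j * ((P ^ ℓ) *ᵥ v) j := by
        rw [pow_succ', ← Matrix.mulVec_mulVec]
        simp [Matrix.mulVec, dotProduct]
      rw [l1, l2, Finset.mul_sum]
      apply Finset.sum_congr rfl
      intro j _
      rw [ih j]
      simp only [hP]
      have h1 : y i ≠ 0 := (hy i).ne'
      have h2 : lam ≠ 0 := hlam.ne'
      field_simp
      ring
  have hLc : ∀ ℓ, (Lcount k m c hm ℓ : ℝ) = lam ^ ℓ * y q0 * ((P ^ ℓ) *ᵥ v) q0 := by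
    intro ℓ
    rw [Lcount, Nat.card_coe_set_eq,
      card_words hmk ℓ (fun _ => 0) (q0_mem k m c hm), hform ℓ]
  have hratio : ∀ ℓ, (Lcount k m c hm (ℓ+1) : ℝ) / (Lcount k m c hm ℓ : ℝ)
      = lam * (((P ^ (ℓ+1)) *ᵥ v) q0 / ((P ^ ℓ) *ᵥ v) q0) := by
    intro ℓ
    rw [hLc, hLc]
    have h1 : y q0 ≠ 0 := (hy q0).ne'
    have h2 : lam ≠ 0 := hlam.ne'
    have h3 : ((P ^ ℓ) *ᵥ v) q0 ≠ 0 := (hg ℓ).ne'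
    have h4 : (lam : ℝ) ^ ℓ ≠ 0 := pow_ne_zero ℓ h2
    field_simp
    ring
  have htend2 : Tendsto (fun ℓ : ℕ => ((P ^ (ℓ+1)) *ᵥ v) q0) atTop (nhds α) := by
    have := (htend q0).comp (tendsto_add_atTop_nat 1)
    simpa [Function.comp_def] using this
  have hfin := (htend2.div (htend q0) hα.ne').const_mul lam
  rw [div_self hα.ne', mul_one] at hfin
  have heq : (fun l : ℕ => (Lcount k m c hm (l + 1) : ℝ) / (Lcount k m c hm l : ℝ))
      = fun l : ℕ => lam * (((P ^ (l+1)) *ᵥ v) q0 / ((P ^ l) *ᵥ v) q0) :=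
    funext hratio
  rw [heq]
  exact hfin
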